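/- For |q|<1, the product x·(−y)·z of the level-7 theta quotients x = q·(q²,q⁵,q⁷,q⁷;q⁷)_∞/(q³,q⁴;q⁷)_∞², y = −q·(q,q⁶,q⁷,q⁷;q⁷)_∞/(q²,q⁵;q⁷)_∞², z = (q³,q⁴,q⁷,q⁷;q⁷)_∞/(q,q⁶;q⁷)_∞² satisfies x·(−y)·z = q²·(q⁷;q⁷)_∞⁷/(q;q)_∞. -/

import Mathlib

open Complex

/-- The q-Pochhammer infinite product `(a; q)_∞ = ∏_{k≥0} (1 - a q^k)`. -/
noncomputable def poch (a q : ℂ) : ℂ := ∏' k : ℕ, (1 - a * q ^ k)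

/-- Level 7 theta quotient `x`. -/
noncomputable def x7 (q : ℂ) : ℂ :=
  q * (poch (q ^ 2) (q ^ 7) * poch (q ^ 5) (q ^ 7) * poch (q ^ 7) (q ^ 7) * poch (q ^ 7) (q ^ 7))
    / (poch (q ^ 3) (q ^ 7) * poch (q ^ 4) (q ^ 7)) ^ 2

/-- Level 7 theta quotient `y`. -/
noncomputable def y7 (q : ℂ) : ℂ :=
  -q * (poch q (q ^ 7) * poch (q ^ 6) (q ^ 7) * poch (q ^ 7) (q ^ 7) * poch (q ^ 7) (q ^ 7))
    / (poch (q ^ 2) (q ^ 7) * poch (q ^ 5) (q ^ 7)) ^ 2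

/-- Level 7 theta quotient `z`. -/
noncomputable def z7 (q : ℂ) : ℂ :=
  (poch (q ^ 3) (q ^ 7) * poch (q ^ 4) (q ^ 7) * poch (q ^ 7) (q ^ 7) * poch (q ^ 7) (q ^ 7))
    / (poch q (q ^ 7) * poch (q ^ 6) (q ^ 7)) ^ 2

/-!
In the product `x · (-y) · z` each of the pairs `(q, q⁶)`, `(q², q⁵)`, `(q³, q⁴)`
of residue-class products `(qⁱ; q⁷)_∞` occurs once in a numerator and squared in a
denominator, so the product collapses to `q² (q⁷; q⁷)_∞⁶ / ∏_{i=1}^{6} (qⁱ; q⁷)_∞`.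
Splitting the factors of `(q; q)_∞` by the residue of the exponent mod 7 gives
`(q; q)_∞ = ∏_{i=1}^{7} (qⁱ; q⁷)_∞`, which is the claim.
-/

section Poch

variable {a q : ℂ}

lemma summable_norm_neg_mul_pow (a : ℂ) (hq : ‖q‖ < 1) :
    Summable fun k : ℕ => ‖-(a * q ^ k)‖ := by
  simpa [norm_mul, norm_pow] using
    (summable_geometric_of_lt_one (norm_nonneg q) hq).mul_left ‖a‖

lemma multipliable_one_sub_mul_pow (a : ℂ) (hq : ‖q‖ < 1) :
    Multipliable fun k : ℕ => 1 - a * q ^ k := by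
  simpa [sub_eq_add_neg] using multipliable_one_add_of_summable (summable_norm_neg_mul_pow a hq)

lemma hasProd_poch (a : ℂ) (hq : ‖q‖ < 1) : HasProd (fun k : ℕ => 1 - a * q ^ k) (poch a q) :=
  (multipliable_one_sub_mul_pow a hq).hasProd

lemma poch_ne_zero (hq : ‖q‖ < 1) (h : ∀ k : ℕ, 1 - a * q ^ k ≠ 0) : poch a q ≠ 0 := by
  simpa [poch, sub_eq_add_neg] using
    tprod_one_add_ne_zero_of_summable (by simpa [sub_eq_add_neg] using h)
      (summable_norm_neg_mul_pow a hq)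

lemma poch_pow_ne_zero (hq : ‖q‖ < 1) {i n : ℕ} (hi : i ≠ 0) (hn : n ≠ 0) :
    poch (q ^ i) (q ^ n) ≠ 0 := by
  refine poch_ne_zero (by simpa using pow_lt_one₀ (norm_nonneg q) hq hn) fun k hk => ?_
  have hnorm : ‖q ^ i * (q ^ n) ^ k‖ < 1 := by
    rw [← pow_mul, ← pow_add, norm_pow]
    exact pow_lt_one₀ (norm_nonneg q) hq (by omega)
  simp [← sub_eq_zero.mp hk] at hnorm

/-- Group the factors `1 - a qᵏ` by the residue of `k` mod `n`. -/
lemma poch_eq_prod_poch_mul_pow (n : ℕ) [NeZero n] (a : ℂ) (hq : ‖q‖ < 1) :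
    poch a q = ∏ i : Fin n, poch (a * q ^ (i : ℕ)) (q ^ n) := by
  have hqn : ‖q ^ n‖ < 1 := by simpa using pow_lt_one₀ (norm_nonneg q) hq (NeZero.ne n)
  let e : Fin n × ℕ ≃ ℕ := (Equiv.prodComm _ _).trans (Nat.divModEquiv n).symm
  have hterm (i : Fin n) (m : ℕ) : 1 - a * q ^ e (i, m) = 1 - a * q ^ (i : ℕ) * (q ^ n) ^ m := by
    simp only [e, Equiv.trans_apply, Equiv.prodComm_apply, Prod.swap_prod_mk,
      Nat.divModEquiv_symm_apply]
    ring
  have hprod : HasProd (fun p : Fin n × ℕ => 1 - a * q ^ e p) (poch a q) :=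
    (e.hasProd_iff (f := fun k : ℕ => 1 - a * q ^ k)).mpr (hasProd_poch a hq)
  have hfiber (i : Fin n) :
      HasProd (fun m : ℕ => 1 - a * q ^ e (i, m)) (poch (a * q ^ (i : ℕ)) (q ^ n)) := by
    simpa only [hterm] using hasProd_poch (a * q ^ (i : ℕ)) hqn
  exact (hprod.prod_fiberwise hfiber).unique (hasProd_fintype _)

end Poch

theorem level7_product_seven_core (q : ℂ) (hq : ‖q‖ < 1) :
    x7 q * (-(y7 q)) * z7 q = q ^ 2 * poch (q ^ 7) (q ^ 7) ^ 7 / poch q q := by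
  have hsplit : poch q q = poch q (q ^ 7) * poch (q ^ 2) (q ^ 7) * poch (q ^ 3) (q ^ 7)
      * poch (q ^ 4) (q ^ 7) * poch (q ^ 5) (q ^ 7) * poch (q ^ 6) (q ^ 7)
      * poch (q ^ 7) (q ^ 7) := by
    simpa [Fin.prod_univ_seven, ← pow_succ'] using poch_eq_prod_poch_mul_pow 7 q hq
  have hne {i : ℕ} (hi : i ≠ 0) : poch (q ^ i) (q ^ 7) ≠ 0 := poch_pow_ne_zero hq hi (by norm_num)
  rw [hsplit, x7, y7, z7]
  field_simp [hne]
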